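/- arXiv:1808.05629 — 3 statements merged into one kernel-verified Lean document; each statement's English description precedes it below -/
import Mathlib

section
/- Let (Ω, F, P) be a probability space, (E, d) a metric space, and X, X_n : Ω → E measurable maps. Suppose (a) for every ε > 0, the outer probability P*(d(X, X_n) ≥ ε) → 0 as n → ∞, and (b) P_{X_n}(O) → P_X(O) for every open set O ⊆ E. Then for every bounded measurable function f : E → ℝ, E|f(X) − f(X_n)| → 0 as n → ∞. -/
open MeasureTheory Filter Topology Metric ENNReal

/-!
Conditions (a) and (b) give, for every Borel set `B`, `P(X ∈ B, Xₙ ∉ B) → 0`: for `B` closed,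
`Xₙ` can only leave `B` from `X ∈ B` by moving at least `δ` or by landing in the thin shell
`thickening δ B \ B`, whose `Xₙ`-mass tends to its (small) `X`-mass because (b) also gives
convergence on closed sets; a general `B` is approximated from inside by a closed set.
Quantising a bounded `f` at scale `ε` into finitely many level sets then shows that
`f ∘ Xₙ → f ∘ X` in probability, and bounded sequences converging in probability converge in `L¹`
(Vitali).
-/

lemma setOf_mem_and_notMem_subset_thickening {Ω E : Type*} [PseudoMetricSpace E] {F : Set E}
    {δ : ℝ} (x y : Ω → E) :
    {ω | x ω ∈ F ∧ y ω ∉ F} ⊆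
      {ω | δ ≤ dist (y ω) (x ω)} ∪ y ⁻¹' (thickening δ F \ F) := by
  rintro ω ⟨hxF, hyF⟩
  by_cases hd : δ ≤ dist (y ω) (x ω)
  · exact .inl hd
  · exact .inr ⟨mem_thickening_iff.2 ⟨x ω, hxF, not_le.1 hd⟩, hyF⟩

section

variable {ι Ω E : Type*} [MeasurableSpace Ω] [MeasurableSpace E] {P : Measure Ω} {l : Filter ι}
  {X : Ω → E} {Xn : ι → Ω → E}

lemma tendsto_measure_of_isClosed_of_tendsto_isOpen [TopologicalSpace E] [OpensMeasurableSpace E]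
    {μ : ι → Measure E} {ν : Measure E} [∀ i, IsFiniteMeasure (μ i)] [IsFiniteMeasure ν]
    (h : ∀ O, IsOpen O → Tendsto (fun i => μ i O) l (𝓝 (ν O))) {F : Set E} (hF : IsClosed F) :
    Tendsto (fun i => μ i F) l (𝓝 (ν F)) := by
  have hcompl : ∀ m : Measure E, [IsFiniteMeasure m] → m F = m Set.univ - m Fᶜ := fun m _ => by
    rw [← measure_compl hF.isOpen_compl.measurableSet (measure_ne_top m _), compl_compl]
  simp only [hcompl]
  exact ENNReal.Tendsto.sub (h _ isOpen_univ) (h _ hF.isOpen_compl) (.inl (measure_ne_top ν _))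

lemma tendsto_measure_comp_ne_of_finite_range {α : Type*} [MeasurableSpace α]
    [MeasurableSingletonClass α] {g : E → α} (hg : Measurable g) (hfin : (Set.range g).Finite)
    (h : ∀ B, MeasurableSet B → Tendsto (fun i => P {ω | X ω ∈ B ∧ Xn i ω ∉ B}) l (𝓝 0)) :
    Tendsto (fun i => P {ω | g (X ω) ≠ g (Xn i ω)}) l (𝓝 0) := by
  have hsub : ∀ i, {ω | g (X ω) ≠ g (Xn i ω)} ⊆
      ⋃ a ∈ hfin.toFinset, {ω | X ω ∈ g ⁻¹' {a} ∧ Xn i ω ∉ g ⁻¹' {a}} := fun i ω hω =>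
    Set.mem_biUnion (hfin.mem_toFinset.2 (Set.mem_range_self _)) ⟨rfl, fun h => hω h.symm⟩
  have hsum := tendsto_finsetSum hfin.toFinset fun a _ => h _ (hg (measurableSet_singleton a))
  rw [Finset.sum_const_zero] at hsum
  exact tendsto_of_tendsto_of_tendsto_of_le_of_le tendsto_const_nhds hsum (fun i => zero_le)
    fun i => (measure_mono (hsub i)).trans (measure_biUnion_finset_le _ _)

lemma tendstoInMeasure_comp_of_abs_le {f : E → ℝ} (hf : Measurable f) {C : ℝ}
    (hC : ∀ x, |f x| ≤ C)
    (h : ∀ B, MeasurableSet B → Tendsto (fun i => P {ω | X ω ∈ B ∧ Xn i ω ∉ B}) l (𝓝 0)) :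
    TendstoInMeasure P (fun i => f ∘ Xn i) l (f ∘ X) := by
  rw [tendstoInMeasure_iff_dist]
  intro ε hε
  set Z : E → ℤ := fun x => ⌊f x / ε⌋
  have hZ : (Set.range Z).Finite := (Set.finite_Icc ⌊-C / ε⌋ ⌊C / ε⌋).subset <| by
    rintro _ ⟨x, rfl⟩
    exact ⟨Int.floor_mono (div_le_div_of_nonneg_right (neg_le_of_abs_le (hC x)) hε.le),
      Int.floor_mono (div_le_div_of_nonneg_right ((le_abs_self _).trans (hC x)) hε.le)⟩
  refine tendsto_of_tendsto_of_tendsto_of_le_of_le tendsto_const_nhds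
    (tendsto_measure_comp_ne_of_finite_range (hf.div_const ε).floor hZ h) (fun i => zero_le)
    fun i => measure_mono fun ω hω hZeq => ?_
  have := Int.abs_sub_lt_one_of_floor_eq_floor hZeq
  rw [← sub_div, abs_div, abs_of_pos hε, div_lt_one hε, ← Real.dist_eq, dist_comm] at this
  exact (not_le.2 this) hω

variable [PseudoMetricSpace E] [IsFiniteMeasure P]

lemma tendsto_measure_mem_and_notMem_of_isClosed [OpensMeasurableSpace E]
    (hXn : ∀ i, Measurable (Xn i)) (hconv : TendstoInMeasure P Xn l X)
    (hopen : ∀ O, IsOpen O → Tendsto (fun i => P.map (Xn i) O) l (𝓝 (P.map X O)))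
    {F : Set E} (hF : IsClosed F) :
    Tendsto (fun i => P {ω | X ω ∈ F ∧ Xn i ω ∉ F}) l (𝓝 0) := by
  rw [ENNReal.tendsto_nhds_zero]
  intro ε hε
  set μ := P.map X
  have hthick : Tendsto (fun r => μ (thickening r F)) (𝓝[>] 0) (𝓝 (μ F)) :=
    tendsto_measure_thickening_of_isClosed ⟨1, one_pos, measure_ne_top μ _⟩ hF
  obtain ⟨δ, hδT, hδ⟩ := ((hthick.eventually_lt_const
    (ENNReal.lt_add_right (measure_ne_top μ F) hε.ne')).and self_mem_nhdsWithin).exists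
  have hdiff : ∀ m : Measure E, [IsFiniteMeasure m] →
      m (thickening δ F \ F) = m (thickening δ F) - m F := fun m _ =>
    measure_sdiff (self_subset_thickening hδ F) hF.measurableSet.nullMeasurableSet
      (measure_ne_top m F)
  have hlim : Tendsto (fun i => P {ω | δ ≤ dist (Xn i ω) (X ω)} +
      P.map (Xn i) (thickening δ F \ F)) l (𝓝 (0 + μ (thickening δ F \ F))) := by
    refine ((tendstoInMeasure_iff_dist.1 hconv) δ hδ).add ?_
    simp only [hdiff]
    exact ENNReal.Tendsto.sub (hopen _ isOpen_thickening)
      (tendsto_measure_of_isClosed_of_tendsto_isOpen hopen hF) (.inl (measure_ne_top μ _))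
  have hsmall : 0 + μ (thickening δ F \ F) < ε := by
    rw [zero_add, hdiff]
    exact ENNReal.sub_lt_of_lt_add (measure_mono (self_subset_thickening hδ F)) (by rwa [add_comm])
  filter_upwards [hlim.eventually_lt_const hsmall] with i hi
  refine le_trans ?_ hi.le
  rw [Measure.map_apply (hXn i) (isOpen_thickening.measurableSet.diff hF.measurableSet)]
  exact (measure_mono (setOf_mem_and_notMem_subset_thickening X (Xn i))).trans
    (measure_union_le _ _)

lemma tendsto_measure_mem_and_notMem [BorelSpace E] (hX : Measurable X)
    (hXn : ∀ i, Measurable (Xn i)) (hconv : TendstoInMeasure P Xn l X)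
    (hopen : ∀ O, IsOpen O → Tendsto (fun i => P.map (Xn i) O) l (𝓝 (P.map X O)))
    {B : Set E} (hB : MeasurableSet B) :
    Tendsto (fun i => P {ω | X ω ∈ B ∧ Xn i ω ∉ B}) l (𝓝 0) := by
  rw [ENNReal.tendsto_nhds_zero]
  intro ε hε
  obtain ⟨F, hFB, hF, hBF⟩ := hB.exists_isClosed_sdiff_lt (μ := P.map X)
    (measure_ne_top _ _) (ENNReal.half_pos hε.ne').ne'
  have hsub : ∀ i, {ω | X ω ∈ B ∧ Xn i ω ∉ B} ⊆
      X ⁻¹' (B \ F) ∪ {ω | X ω ∈ F ∧ Xn i ω ∉ F} := by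
    rintro i ω ⟨hXB, hXnB⟩
    by_cases hXF : X ω ∈ F
    exacts [.inr ⟨hXF, fun h => hXnB (hFB h)⟩, .inl ⟨hXB, hXF⟩]
  filter_upwards [(ENNReal.tendsto_nhds_zero.1 (tendsto_measure_mem_and_notMem_of_isClosed
    hXn hconv hopen hF)) (ε / 2) (ENNReal.half_pos hε.ne')] with i hi
  calc P {ω | X ω ∈ B ∧ Xn i ω ∉ B}
      ≤ P (X ⁻¹' (B \ F)) + P {ω | X ω ∈ F ∧ Xn i ω ∉ F} :=
        (measure_mono (hsub i)).trans (measure_union_le _ _)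
    _ ≤ ε / 2 + ε / 2 := by
        rw [← Measure.map_apply hX (hB.diff hF.measurableSet)]
        exact add_le_add hBF.le hi
    _ = ε := ENNReal.add_halves ε

end

lemma unifIntegrable_of_forall_norm_le {ι α β : Type*} [MeasurableSpace α] [NormedAddCommGroup β]
    {μ : Measure α} {p : ℝ≥0∞} (hp : 1 ≤ p) (hp' : p ≠ ∞) {f : ι → α → β}
    (hf : ∀ i, AEStronglyMeasurable (f i) μ) {C : ℝ} (hC : ∀ i x, ‖f i x‖ ≤ C) :
    UnifIntegrable f p μ := by
  refine unifIntegrable_of hp hp' hf fun ε _ => ⟨C.toNNReal + 1, fun i => ?_⟩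
  have hempty : {x | C.toNNReal + 1 ≤ ‖f i x‖₊} = ∅ := by
    refine Set.eq_empty_of_forall_notMem fun x hx => ?_
    have : (C.toNNReal : ℝ) + 1 ≤ ‖f i x‖ := by exact_mod_cast hx
    linarith [hC i x, C.le_coe_toNNReal]
  rw [hempty, Set.indicator_empty, eLpNorm_zero']
  exact zero_le

/-- convergence in outer probability plus setwise convergence of the
distributions on open sets implies `E|f(X) - f(Xn)| → 0` for every bounded
measurable `f`. -/
theorem stmt_0
    {Ω : Type*} [MeasurableSpace Ω] (P : Measure Ω) [IsProbabilityMeasure P]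
    {E : Type*} [MetricSpace E] [MeasurableSpace E] [BorelSpace E]
    (X : Ω → E) (Xn : ℕ → Ω → E)
    (hX : Measurable X) (hXn : ∀ n, Measurable (Xn n))
    (ha : ∀ ε > (0 : ℝ),
      Tendsto (fun n => P {ω | ε ≤ dist (X ω) (Xn n ω)}) atTop (𝓝 0))
    (hb : ∀ O : Set E, IsOpen O →
      Tendsto (fun n => Measure.map (Xn n) P O) atTop (𝓝 (Measure.map X P O))) :
    ∀ f : E → ℝ, Measurable f → (∃ C : ℝ, ∀ x, |f x| ≤ C) →
      Tendsto (fun n => ∫ ω, |f (X ω) - f (Xn n ω)| ∂P) atTop (𝓝 0) := by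
  rintro f hf ⟨C, hC⟩
  have hconv : TendstoInMeasure P Xn atTop X :=
    tendstoInMeasure_iff_dist.2 fun ε hε => by simpa only [dist_comm] using ha ε hε
  have hfconv := tendstoInMeasure_comp_of_abs_le hf hC fun B hB =>
    tendsto_measure_mem_and_notMem hX hXn hconv hb hB
  have hmeas : ∀ n, AEStronglyMeasurable (f ∘ Xn n) P := fun n =>
    (hf.comp (hXn n)).aestronglyMeasurable
  have hL1 := tendsto_Lp_finite_of_tendstoInMeasure le_rfl one_ne_top hmeas
    (MemLp.of_bound (hf.comp hX).aestronglyMeasurable C (ae_of_all _ fun ω => hC (X ω)))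
    (unifIntegrable_of_forall_norm_le le_rfl one_ne_top hmeas fun n ω => hC (Xn n ω)) hfconv
  refine ((ENNReal.tendsto_toReal zero_ne_top).comp hL1).congr fun n => ?_
  rw [Function.comp_apply, eLpNorm_one_eq_lintegral_enorm, ← integral_norm_eq_lintegral_enorm
    ((hmeas n).sub (hf.comp hX).aestronglyMeasurable)]
  simp only [Pi.sub_apply, Function.comp_apply, Real.norm_eq_abs, abs_sub_comm]
end

section
/- Let (Ω, F, P) be a probability space, (E, d) a metric space, and X, X_n : Ω → E measurable. Assume there is a P-null set N such that X(Ω \ N) is separable, and that E|f(X) − f(X_n)| → 0 for every bounded measurable f : E → ℝ. Then (a) P*(d(X, X_n) ≥ ε) → 0 for all ε > 0, and (b) P_{X_n}(O) → P_X(O) for every open O ⊆ E. -/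
/-!
Testing the hypothesis on indicators `1_B` gives `P(X⁻¹ B ∆ Xₙ⁻¹ B) → 0` for every Borel set `B`,
which yields (b) at once. For (a), cover `X(Ω \ N)` by countably many balls `B_k` of radius
`ε/2`: on `X⁻¹ B_k` the event `ε ≤ d(X, Xₙ)` forces `Xₙ ∉ B_k`, so it lies in
`X⁻¹ B_k ∆ Xₙ⁻¹ B_k`; since the balls cover up to a null set, finitely many of them carry all but
an arbitrarily small part of the mass.
-/

open MeasureTheory Filter Topology
open scoped symmDiff ENNReal

theorem TopologicalSpace.IsSeparable.exists_subset_iUnion_ball {E : Type*} [PseudoMetricSpace E]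
    [Nonempty E] {s : Set E} (hs : IsSeparable s) {r : ℝ} (hr : 0 < r) :
    ∃ e : ℕ → E, s ⊆ ⋃ k, Metric.ball (e k) r := by
  obtain ⟨c, hc, hsc⟩ := hs
  obtain ⟨e, he⟩ := (hc.insert (Classical.arbitrary E)).exists_eq_range (Set.insert_nonempty _ _)
  refine ⟨e, fun x hx => ?_⟩
  obtain ⟨y, hy, hxy⟩ := Metric.mem_closure_iff.1 (hsc hx) r hr
  obtain ⟨k, rfl⟩ : y ∈ Set.range e := he ▸ Set.mem_insert_of_mem _ hy
  exact Set.mem_iUnion.2 ⟨k, hxy⟩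

namespace MeasureTheory

variable {Ω ι : Type*} [MeasurableSpace Ω] {μ : Measure Ω} {l : Filter ι}

theorem integral_abs_indicator_one_sub_indicator_one {s t : Set Ω} (hs : MeasurableSet s)
    (ht : MeasurableSet t) :
    ∫ ω, |(s.indicator 1 ω : ℝ) - t.indicator 1 ω| ∂μ = μ.real (s ∆ t) := by
  rw [← integral_indicator_one (hs.symmDiff ht)]
  congr 1 with ω
  rw [← Set.apply_indicator_symmDiff abs_neg, abs_of_nonneg (Set.indicator_nonneg (by simp) _)]

theorem tendsto_measure_symmDiff_of_tendsto_integral_abs_indicator [IsFiniteMeasure μ]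
    {s : ι → Set Ω} {t : Set Ω} (hs : ∀ i, MeasurableSet (s i)) (ht : MeasurableSet t)
    (h : Tendsto (fun i => ∫ ω, |(t.indicator 1 ω : ℝ) - (s i).indicator 1 ω| ∂μ) l (𝓝 0)) :
    Tendsto (fun i => μ (s i ∆ t)) l (𝓝 0) := by
  rw [← ENNReal.tendsto_toReal_iff (fun i => measure_ne_top _ _) ENNReal.zero_ne_top]
  simpa only [integral_abs_indicator_one_sub_indicator_one ht (hs _), symmDiff_comm t,
    measureReal_def, ENNReal.toReal_zero] using h

theorem tendsto_measure_of_tendsto_measure_symmDiff {s : ι → Set Ω} {t : Set Ω} (ht : μ t ≠ ∞)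
    (h : Tendsto (fun i => μ (s i ∆ t)) l (𝓝 0)) :
    Tendsto (fun i => μ (s i)) l (𝓝 (μ t)) := by
  refine (ENNReal.tendsto_nhds ht).2 fun δ hδ => ?_
  filter_upwards [ENNReal.tendsto_nhds_zero.1 h δ hδ] with i hi
  refine ⟨tsub_le_iff_right.2 ?_, tsub_le_iff_left.1 ?_⟩
  · exact tsub_le_iff_left.1 (le_measure_symmDiff.trans (by rwa [symmDiff_comm]))
  · exact le_measure_symmDiff.trans hi

theorem tendsto_measure_inter_accumulate {A : ι → Set Ω} {V : ℕ → Set Ω}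
    (h : ∀ k, Tendsto (fun i => μ (A i ∩ V k)) l (𝓝 0)) (K : ℕ) :
    Tendsto (fun i => μ (A i ∩ Set.accumulate V K)) l (𝓝 0) := by
  induction K with
  | zero => simpa only [Set.accumulate_zero_nat] using h 0
  | succ K ih =>
    simp_rw [Set.accumulate_succ, Set.inter_union_distrib_left]
    refine tendsto_of_tendsto_of_tendsto_of_le_of_le tendsto_const_nhds
      (by simpa using ih.add (h (K + 1))) (fun _ => zero_le) (fun i => measure_union_le _ _)

theorem tendsto_measure_zero_of_forall_tendsto_measure_inter [IsFiniteMeasure μ] {A : ι → Set Ω}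
    {V : ℕ → Set Ω} (hV : ∀ k, MeasurableSet (V k)) (hcover : μ (⋃ k, V k)ᶜ = 0)
    (h : ∀ k, Tendsto (fun i => μ (A i ∩ V k)) l (𝓝 0)) :
    Tendsto (fun i => μ (A i)) l (𝓝 0) := by
  have htail : Tendsto (fun K => μ (Set.accumulate V K)ᶜ) atTop (𝓝 0) := by
    rw [← hcover, ← Set.iUnion_accumulate, Set.compl_iUnion]
    exact tendsto_measure_iInter_atTop
      (fun K =>
        (MeasurableSet.biUnion (Set.to_countable _) fun k _ => hV k).compl.nullMeasurableSet)
      (fun _ _ hKL => Set.compl_subset_compl.2 (Set.monotone_accumulate hKL))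
      ⟨0, measure_ne_top _ _⟩
  refine ENNReal.tendsto_nhds_zero.2 fun δ hδ => ?_
  have hδ2 : 0 < δ / 2 := ENNReal.half_pos hδ.ne'
  obtain ⟨K, hK⟩ := (htail.eventually_lt_const hδ2).exists
  filter_upwards [(tendsto_measure_inter_accumulate h K).eventually_lt_const hδ2] with i hi
  calc μ (A i) ≤ μ (A i ∩ Set.accumulate V K) + μ (A i \ Set.accumulate V K) :=
        measure_le_inter_add_sdiff _ _ _
    _ ≤ δ / 2 + δ / 2 := add_le_add hi.le ((measure_mono (Set.sdiff_subset_compl _ _)).trans hK.le)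
    _ = δ := ENNReal.add_halves δ

end MeasureTheory

/-- if `X(Ω \ N)` is separable for some null set `N` and
`E|f(X) - f(Xn)| → 0` for all bounded measurable `f`, then `Xn → X` in outer
probability and the laws converge on open sets. -/
theorem stmt_1
    {Ω : Type*} [MeasurableSpace Ω] (P : Measure Ω) [IsProbabilityMeasure P]
    {E : Type*} [MetricSpace E] [MeasurableSpace E] [BorelSpace E]
    (X : Ω → E) (Xn : ℕ → Ω → E)
    (hX : Measurable X) (hXn : ∀ n, Measurable (Xn n))
    (N : Set Ω) (hN : P N = 0) (hsep : TopologicalSpace.IsSeparable (X '' Nᶜ))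
    (hconv : ∀ f : E → ℝ, Measurable f → (∃ C : ℝ, ∀ x, |f x| ≤ C) →
      Tendsto (fun n => ∫ ω, |f (X ω) - f (Xn n ω)| ∂P) atTop (𝓝 0)) :
    (∀ ε > (0 : ℝ),
      Tendsto (fun n => P {ω | ε ≤ dist (X ω) (Xn n ω)}) atTop (𝓝 0)) ∧
    (∀ O : Set E, IsOpen O →
      Tendsto (fun n => Measure.map (Xn n) P O) atTop (𝓝 (Measure.map X P O))) := by
  have hsymm : ∀ B, MeasurableSet B →
      Tendsto (fun n => P ((Xn n ⁻¹' B) ∆ (X ⁻¹' B))) atTop (𝓝 0) := fun B hB =>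
    tendsto_measure_symmDiff_of_tendsto_integral_abs_indicator (fun n => hXn n hB) (hX hB) <| by
      simpa only [← Set.indicator_comp_right, Pi.one_comp] using hconv (B.indicator 1)
        (measurable_const.indicator hB) ⟨1, fun x => by by_cases hx : x ∈ B <;> simp [hx]⟩
  refine ⟨fun ε hε => ?_, fun O hO => ?_⟩
  · have : Nonempty E := (nonempty_of_isProbabilityMeasure P).map X
    obtain ⟨e, he⟩ := hsep.exists_subset_iUnion_ball (half_pos hε)
    have hcover : Nᶜ ⊆ ⋃ k, X ⁻¹' Metric.ball (e k) (ε / 2) := fun ω hω => by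
      simpa using he ⟨ω, hω, rfl⟩
    refine tendsto_measure_zero_of_forall_tendsto_measure_inter (fun k => hX measurableSet_ball)
      (measure_mono_null (Set.compl_subset_comm.1 hcover) hN) fun k => ?_
    refine tendsto_of_tendsto_of_tendsto_of_le_of_le tendsto_const_nhds
      (hsymm (Metric.ball (e k) (ε / 2)) measurableSet_ball) (fun _ => zero_le)
      fun n => measure_mono ?_
    rintro ω ⟨hfar : ε ≤ dist (X ω) (Xn n ω), hnear : dist (X ω) (e k) < ε / 2⟩
    refine Set.mem_symmDiff.2 (Or.inr ⟨hnear, fun hnear' : dist (Xn n ω) (e k) < ε / 2 => ?_⟩)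
    linarith [dist_triangle_right (X ω) (Xn n ω) (e k)]
  · rw [Measure.map_apply hX hO.measurableSet]
    simp_rw [Measure.map_apply (hXn _) hO.measurableSet]
    exact tendsto_measure_of_tendsto_measure_symmDiff (measure_ne_top _ _)
      (hsymm O hO.measurableSet)
end

section
/- Consider the delay SDE dX^x(t) = sgn(X^x(t−1)) dt + dW(t) with sgn(x) = 1 for x ≥ 0 and −1 for x < 0, with constant initial paths. Then for the constant initial path 0 one has X^0(1) = W(1) + 1, while for the constant initial path −1/n one has X^{−1/n}(1) = W(1) − 1 − 1/n. In particular, X^{−1/n}(1) does not converge in probability to X^0(1) as n → ∞, so the solution map fails to be continuous in the initial condition and the strong Feller property fails at time 1. -/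
open MeasureTheory Filter Topology intervalIntegral

/-- The sign function with `sgn 0 = 1`, as in the counterexample. -/
noncomputable def sgn (x : ℝ) : ℝ := if 0 ≤ x then 1 else -1

/-- counterexample. For the delay SDE
`dX(t) = sgn(X(t−1))dt + dW(t)` with constant initial paths `0` and `−1/n`,
one has `X⁰(1) = W(1) + 1` and `X^{−1/n}(1) = W(1) − 1 − 1/n`; in particular
`X^{−1/n}(1)` does not converge in probability to `X⁰(1)`. -/
theorem stmt_12
    {Ω : Type*} [MeasurableSpace Ω] (P : Measure Ω) [IsProbabilityMeasure P]
    (W : ℝ → Ω → ℝ) (hW0 : ∀ ω, W 0 ω = 0)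
    (X0 : ℝ → Ω → ℝ) (Xn : ℕ → ℝ → Ω → ℝ)
    (hX0init : ∀ t ∈ Set.Icc (-1 : ℝ) 0, ∀ ω, X0 t ω = 0)
    (hXninit : ∀ n : ℕ, 0 < n → ∀ t ∈ Set.Icc (-1 : ℝ) 0, ∀ ω,
      Xn n t ω = -(1 / n))
    (hX0eq : ∀ t ∈ Set.Icc (0 : ℝ) 1, ∀ ω,
      X0 t ω = 0 + (∫ s in (0 : ℝ)..t, sgn (X0 (s - 1) ω)) + W t ω)
    (hXneq : ∀ n : ℕ, 0 < n → ∀ t ∈ Set.Icc (0 : ℝ) 1, ∀ ω,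
      Xn n t ω = -(1 / n) + (∫ s in (0 : ℝ)..t, sgn (Xn n (s - 1) ω)) + W t ω) :
    (∀ ω, X0 1 ω = W 1 ω + 1) ∧
    (∀ n : ℕ, 0 < n → ∀ ω, Xn n 1 ω = W 1 ω - 1 - 1 / n) ∧
    ¬ (∀ ε > (0 : ℝ),
        Tendsto (fun n : ℕ => P {ω | ε ≤ |Xn n 1 ω - X0 1 ω|}) atTop (𝓝 0)) := by
  have h0 : ∀ ω, X0 1 ω = W 1 ω + 1 := by
    intro ω
    have := hX0eq 1 (by norm_num) ω
    rw [this]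
    have hI : (∫ s in (0:ℝ)..1, sgn (X0 (s - 1) ω)) = ∫ s in (0:ℝ)..1, (1:ℝ) := by
      apply intervalIntegral.integral_congr
      intro s hs
      rw [Set.uIcc_of_le (by norm_num : (0:ℝ) ≤ 1)] at hs
      have : X0 (s - 1) ω = 0 := hX0init (s - 1) ⟨by linarith [hs.1], by linarith [hs.2]⟩ ω
      simp [this, sgn]
    rw [hI]
    simp
    ring
  have hn : ∀ n : ℕ, 0 < n → ∀ ω, Xn n 1 ω = W 1 ω - 1 - 1 / n := by
    intro n hnpos ω
    have := hXneq n hnpos 1 (by norm_num) ω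
    rw [this]
    have hI : (∫ s in (0:ℝ)..1, sgn (Xn n (s - 1) ω)) = ∫ s in (0:ℝ)..1, (-1:ℝ) := by
      apply intervalIntegral.integral_congr
      intro s hs
      rw [Set.uIcc_of_le (by norm_num : (0:ℝ) ≤ 1)] at hs
      have hv : Xn n (s - 1) ω = -(1 / n) :=
        hXninit n hnpos (s - 1) ⟨by linarith [hs.1], by linarith [hs.2]⟩ ω
      have hneg : ¬ (0:ℝ) ≤ -(1 / n) := by
        push_neg
        have : (0:ℝ) < 1 / n := by positivity
        linarith
      show sgn (Xn n (s-1) ω) = -1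
      rw [hv]; unfold sgn; rw [if_neg hneg]
    rw [hI]
    simp
    ring
  refine ⟨h0, hn, ?_⟩
  intro h
  have h1 := h 1 one_pos
  have hev : ∀ᶠ n : ℕ in atTop,
      P {ω | (1:ℝ) ≤ |Xn n 1 ω - X0 1 ω|} = 1 := by
    filter_upwards [eventually_gt_atTop 0] with n hnpos
    have : {ω | (1:ℝ) ≤ |Xn n 1 ω - X0 1 ω|} = Set.univ := by
      ext ω
      simp only [Set.mem_setOf_eq, Set.mem_univ, iff_true]
      rw [hn n hnpos ω, h0 ω]
      have hpos : (0:ℝ) ≤ 1 / n := by positivity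
      rw [abs_of_nonpos (by linarith)]
      linarith
    rw [this, measure_univ]
  have h2 : Tendsto (fun _ : ℕ => (1 : ENNReal)) atTop (𝓝 0) :=
    h1.congr' hev
  have := tendsto_nhds_unique h2 tendsto_const_nhds
  exact one_ne_zero this.symm
end
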